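/- Let V be a finite-dimensional real vector space and C ⊆ V a convex set. A nonempty convex set E is an extreme set of C if and only if there is a finite sequence of convex sets F_0, …, F_n such that F_0 = C, F_n = E, and F_{i+1} is an exposed face of F_i for each i ∈ {0, …, n−1}. -/

import Mathlib

/-!
One direction holds because an exposed face of `C` is an extreme set of `C` and being an extreme
set is transitive. Conversely, take `x` in the relative interior of `E`. If every segment from a
point of `C` to `x` can be prolonged beyond `x` inside `C`, then extremality of `E` forces
`C ⊆ E`. Otherwise a supporting hyperplane through `x` that does not contain `C` cuts out an
exposed face `F` of `C`; it contains `E` because `x` is relatively interior to `E`, `E` is still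
extreme in `F`, and `F` has smaller dimension than `C`, so we conclude by induction on dimension.
-/

open Set Filter Topology

noncomputable section

/-- `F` is an exposed face of `C`: the intersection of `C` with a supporting
hyperplane of `C`, i.e. there are a linear functional `l` and a constant `c` with
`l ≤ c` on `C`, `l` attaining the value `c` somewhere on `C`, and
`F = {x ∈ C | l x = c}`. -/
def IsExposedFace {V : Type*} [AddCommGroup V] [Module ℝ V] (C F : Set V) : Prop :=
  ∃ (l : V →ₗ[ℝ] ℝ) (c : ℝ), (∀ x ∈ C, l x ≤ c) ∧ (∃ x ∈ C, l x = c) ∧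
    F = {x ∈ C | l x = c}

theorem Relation.reflTransGen_iff_exists_nat_chain {α : Type*} {r : α → α → Prop} {a b : α} :
    Relation.ReflTransGen r a b ↔
      ∃ (n : ℕ) (f : ℕ → α), f 0 = a ∧ f n = b ∧ ∀ i < n, r (f i) (f (i + 1)) := by
  constructor
  · intro h
    induction h using Relation.ReflTransGen.head_induction_on with
    | refl => exact ⟨0, fun _ => b, rfl, rfl, by simp⟩
    | head hac _ ih =>
      obtain ⟨n, f, rfl, rfl, hf⟩ := ih
      refine ⟨n + 1, fun | 0 => _ | i + 1 => f i, rfl, rfl, ?_⟩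
      rintro (_ | i) hi
      exacts [hac, hf i (by omega)]
  · rintro ⟨n, f, rfl, rfl, hf⟩
    induction n with
    | zero => exact .refl
    | succ n ih => exact .tail (ih fun i hi => hf i (by omega)) (hf n n.lt_succ_self)

section Module

variable {V : Type*} [AddCommGroup V] [Module ℝ V] {C F : Set V}

theorem IsExposedFace.isExtreme (h : IsExposedFace C F) : IsExtreme ℝ C F := by
  obtain ⟨l, c, hle, -, rfl⟩ := h
  refine ⟨sep_subset _ _, fun x₁ hx₁ x₂ hx₂ x ⟨_, hx⟩ hseg => ⟨hx₁, ?_⟩⟩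
  have hl : ConvexOn ℝ univ l := l.convexOn convex_univ
  exact (hle x₁ hx₁).antisymm
    (hx ▸ hl.le_left_of_right_le (mem_univ _) (mem_univ _) hseg (hx ▸ hle x₂ hx₂))

theorem IsExposedFace.convex (h : IsExposedFace C F) (hC : Convex ℝ C) : Convex ℝ F := by
  obtain ⟨l, c, -, -, rfl⟩ := h
  exact hC.inter ((convex_singleton c).linear_preimage l)

theorem IsExtreme.of_reflTransGen_isExposedFace {E : Set V}
    (h : Relation.ReflTransGen IsExposedFace C E) : IsExtreme ℝ C E := by
  induction h with
  | refl => exact .refl ℝ C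
  | tail _ hFE ih => exact ih.trans hFE.isExtreme

theorem convex_of_forall_isExposedFace_succ {F : ℕ → Set V} {n : ℕ} (h0 : Convex ℝ (F 0))
    (hF : ∀ i < n, IsExposedFace (F i) (F (i + 1))) : ∀ i ≤ n, Convex ℝ (F i) := by
  intro i hi
  induction i with
  | zero => exact h0
  | succ i ih => exact (hF i hi).convex (ih (by omega))

end Module

theorem vectorSpan_lt_of_apply_ne {K V : Type*} [Field K] [AddCommGroup V] [Module K V]
    {C F : Set V} (hFC : F ⊆ C) {l : V →ₗ[K] K} {c : K} (hF : ∀ z ∈ F, l z = c) {x y : V}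
    (hx : x ∈ F) (hy : y ∈ C) (hly : l y ≠ c) : vectorSpan K F < vectorSpan K C := by
  have hker : vectorSpan K F ≤ LinearMap.ker l := by
    rw [vectorSpan_def, Submodule.span_le]
    rintro _ ⟨a, ha, b, hb, rfl⟩
    simp [hF a ha, hF b hb]
  refine SetLike.lt_iff_le_and_exists.2 ⟨vectorSpan_mono K hFC, y - x,
    vsub_mem_vectorSpan K hy (hFC hx), fun hmem => hly ?_⟩
  simpa [hF x hx, sub_eq_zero] using hker hmem

/-- For convex `s` this is the relative algebraic interior of `s`, in the form of Rockafellar's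
Theorem 6.4: every segment from a point of `s` to `x` can be prolonged beyond `x` inside `s`. -/
def intrinsicCore (𝕜 : Type*) {V : Type*} [Semiring 𝕜] [PartialOrder 𝕜] [AddCommGroup V]
    [Module 𝕜 V] (s : Set V) : Set V :=
  {x | x ∈ s ∧ ∀ y ∈ s, ∃ ε : 𝕜, 0 < ε ∧ x + ε • (x - y) ∈ s}

theorem IsExtreme.subset_of_mem_intrinsicCore {𝕜 V : Type*} [Field 𝕜] [LinearOrder 𝕜]
    [IsStrictOrderedRing 𝕜] [AddCommGroup V] [Module 𝕜 V] {C D F : Set V} {x : V}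
    (hF : IsExtreme 𝕜 C F) (hDC : D ⊆ C) (hxF : x ∈ F) (hx : x ∈ intrinsicCore 𝕜 D) :
    D ⊆ F := by
  intro y hy
  obtain ⟨ε, hε, hz⟩ := hx.2 y hy
  refine hF.2 (hDC hy) (hDC hz) hxF ⟨ε / (1 + ε), 1 / (1 + ε), by positivity, by positivity,
    by field_simp; ring, ?_⟩
  match_scalars <;> field_simp; ring

theorem Convex.exists_forall_le_and_lt_of_notMem_interior {E : Type*} [TopologicalSpace E]
    [AddCommGroup E] [IsTopologicalAddGroup E] [Module ℝ E] [ContinuousSMul ℝ E]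
    [LocallyConvexSpace ℝ E] {A : Set E} {x : E} (hA : Convex ℝ A) (hxA : x ∉ interior A)
    (hAint : (interior A).Nonempty) :
    ∃ f : StrongDual ℝ E, (∀ a ∈ A, f a ≤ f x) ∧ ∃ a ∈ A, f a < f x := by
  obtain ⟨f, hf0, hf⟩ := geometric_hahn_banach_of_nonempty_interior_point hA hxA hAint
  refine ⟨f, hf, ?_⟩
  by_contra! hconst
  -- a nonzero functional is an open map, so it cannot be constant on the open set `interior A`
  have : f '' interior A ⊆ interior {f x} :=
    interior_maximal
      (image_subset_iff.2 fun a ha =>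
        (hf a (interior_subset ha)).antisymm (hconst a (interior_subset ha)))
      (f.isOpenMap_of_ne_zero hf0 _ isOpen_interior)
  rw [interior_singleton] at this
  exact (hAint.image f).ne_empty (subset_empty_iff.1 this)

section Normed

variable {V : Type*} [NormedAddCommGroup V] [NormedSpace ℝ V]

theorem intrinsicInterior_subset_intrinsicCore (s : Set V) :
    intrinsicInterior ℝ s ⊆ intrinsicCore ℝ s := by
  rintro _ ⟨x, hx, rfl⟩
  refine ⟨intrinsicInterior_subset ⟨x, hx, rfl⟩, fun y hy => ?_⟩
  let g : ℝ → affineSpan ℝ s := fun t => ⟨t • ((x : V) - y) + x,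
    AffineSubspace.smul_vsub_vadd_mem _ t x.2 (subset_affineSpan ℝ s hy) x.2⟩
  have hg : Continuous g := by fun_prop
  have hg0 : g 0 = x := by simp [g]
  have : ∀ᶠ t in 𝓝[>] (0 : ℝ), g t ∈ interior ((↑) ⁻¹' s) :=
    nhdsWithin_le_nhds ((hg.tendsto 0).eventually (isOpen_interior.mem_nhds (hg0 ▸ hx)))
  obtain ⟨t, hgt, ht⟩ := (this.and self_mem_nhdsWithin).exists
  exact ⟨t, ht, by simpa [g, add_comm] using interior_subset hgt⟩

variable [FiniteDimensional ℝ V]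

theorem Convex.exists_forall_le_and_lt_of_notMem_intrinsicCore {C : Set V} (hC : Convex ℝ C)
    {x : V} (hxC : x ∈ C) (hx : x ∉ intrinsicCore ℝ C) :
    ∃ l : V →ₗ[ℝ] ℝ, (∀ y ∈ C, l y ≤ l x) ∧ ∃ y ∈ C, l y < l x := by
  -- translated by `-x` and restricted to the span `W` of `C - x`, `C` becomes a convex set `S`
  -- with nonempty interior, and the segment from `y₀` that cannot be prolonged keeps `0` out of
  -- `interior S`
  obtain ⟨y₀, hy₀, hy₀x⟩ : ∃ y₀ ∈ C, ∀ ε : ℝ, 0 < ε → x + ε • (x - y₀) ∉ C := by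
    simpa [intrinsicCore, hxC] using hx
  set T : Set V := (· + x) ⁻¹' C
  set W := Submodule.span ℝ T
  set S : Set W := (↑) ⁻¹' T
  have hS : Convex ℝ S := (hC.translate_preimage_left x).linear_preimage W.subtype
  have h0S : (0 : W) ∈ S := by simpa [S, T] using hxC
  have hSint : (interior S).Nonempty := by
    rw [hS.interior_nonempty_iff_affineSpan_eq_top,
      AffineSubspace.affineSpan_eq_top_iff_vectorSpan_eq_top_of_nonempty ℝ W W ⟨0, h0S⟩,
      vectorSpan_eq_span_vsub_set_right ℝ h0S]
    simp only [vsub_eq_sub, sub_zero, image_id']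
    exact Submodule.span_span_coe_preimage
  have h0 : (0 : W) ∉ interior S := by
    intro h0
    have hw₀ : x - y₀ ∈ W := by
      simpa using W.neg_mem (Submodule.subset_span (show y₀ - x ∈ T by simpa [T] using hy₀))
    have : ∀ᶠ t in 𝓝[>] (0 : ℝ), t • (⟨x - y₀, hw₀⟩ : W) ∈ interior S :=
      nhdsWithin_le_nhds <| (tendsto_id.smul_const _).eventually <|
        isOpen_interior.mem_nhds (by rwa [zero_smul])
    obtain ⟨t, ht, ht0⟩ := (this.and self_mem_nhdsWithin).exists
    exact hy₀x t ht0 (by simpa [S, T, add_comm] using interior_subset ht)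
  obtain ⟨f, hf, ⟨a, ha⟩, haS, hfa⟩ := hS.exists_forall_le_and_lt_of_notMem_interior h0 hSint
  obtain ⟨l, hl⟩ := (f : W →ₗ[ℝ] ℝ).exists_extend
  have hlf : ∀ w : W, l w = f w := fun w => LinearMap.congr_fun hl w
  refine ⟨l, fun y hy => ?_, a + x, haS, ?_⟩
  · have hyW : y - x ∈ W := Submodule.subset_span (by simpa [T] using hy)
    have hfy := hf ⟨y - x, hyW⟩ (by simpa [S, T] using hy)
    have hly := hlf ⟨y - x, hyW⟩
    simp only [map_sub, map_zero] at hfy hly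
    linarith
  · have hla := hlf ⟨a, ha⟩
    rw [map_zero] at hfa
    rw [map_add]
    linarith

theorem IsExtreme.reflTransGen_isExposedFace {C E : Set V} (hC : Convex ℝ C)
    (hE : Convex ℝ E) (hEne : E.Nonempty) (hCE : IsExtreme ℝ C E) :
    Relation.ReflTransGen IsExposedFace C E := by
  induction hd : Module.finrank ℝ (vectorSpan ℝ C) using Nat.strong_induction_on generalizing C
    with | _ d ih =>
  obtain ⟨x, hxE⟩ := (hEne.intrinsicInterior hE).mono (intrinsicInterior_subset_intrinsicCore E)
  have hxC : x ∈ C := hCE.1 hxE.1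
  by_cases hx : x ∈ intrinsicCore ℝ C
  · rw [(hCE.1).antisymm (hCE.subset_of_mem_intrinsicCore subset_rfl hxE.1 hx)]
  obtain ⟨l, hl, y, hy, hly⟩ := hC.exists_forall_le_and_lt_of_notMem_intrinsicCore hxC hx
  set F := {z ∈ C | l z = l x}
  have hCF : IsExposedFace C F := ⟨l, l x, hl, ⟨x, hxC, rfl⟩, rfl⟩
  have hEF : E ⊆ F := hCF.isExtreme.subset_of_mem_intrinsicCore hCE.1 ⟨hxC, rfl⟩ hxE
  have hdim : Module.finrank ℝ (vectorSpan ℝ F) < d := hd ▸ Submodule.finrank_lt_finrank_of_lt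
    (vectorSpan_lt_of_apply_ne (sep_subset _ _) (fun _ hz => hz.2) ⟨hxC, rfl⟩ hy hly.ne)
  exact .head hCF (ih _ hdim (hCF.convex hC) (hCE.mono (sep_subset _ _) hEF) rfl)

end Normed

theorem extreme_iff_chain_of_exposed_faces (V : Type*) [AddCommGroup V] [Module ℝ V]
    [FiniteDimensional ℝ V] (C E : Set V) (hC : Convex ℝ C) (hE : Convex ℝ E)
    (hEne : E.Nonempty) :
    IsExtreme ℝ C E ↔
      ∃ (n : ℕ) (F : ℕ → Set V), F 0 = C ∧ F n = E ∧ (∀ i ≤ n, Convex ℝ (F i)) ∧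
        ∀ i < n, IsExposedFace (F i) (F (i + 1)) := by
  constructor
  · intro hCE
    let e := (Module.finBasis ℝ V).equivFun
    let := NormedAddCommGroup.induced V _ e e.injective
    let := NormedSpace.induced ℝ V _ e
    obtain ⟨n, F, hF0, hFn, hF⟩ := Relation.reflTransGen_iff_exists_nat_chain.1
      (hCE.reflTransGen_isExposedFace hC hE hEne)
    exact ⟨n, F, hF0, hFn, convex_of_forall_isExposedFace_succ (hF0 ▸ hC) hF, hF⟩
  · rintro ⟨n, F, rfl, rfl, -, hF⟩
    exact .of_reflTransGen_isExposedFace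
      (Relation.reflTransGen_iff_exists_nat_chain.2 ⟨n, F, rfl, rfl, hF⟩)
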